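/- Let 𝒜 and ℬ be reduced gST-automata and let 𝒜*ℬ be the gST-automaton with states Q_𝒜 ⊔ Q_ℬ, transitions E_𝒜 ⊔ E_ℬ together with a transition from p to q labelled id_{μ_𝒜(p)} for every accepting state p of 𝒜 and initial state q of ℬ with μ_𝒜(p) ≅ μ_ℬ(q), initial states ⊥_𝒜 and accepting states ⊤_ℬ. Then L(𝒜*ℬ) = L(𝒜)·L(ℬ). -/

import Mathlib

open scoped Classical

namespace HDA

/-! ### Ipomsets over a fixed alphabet -/

structure PreIpomset (σ : Type) : Type 1 where
  carrier : Type
  fin : Finite carrier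
  lt : carrier → carrier → Prop
  evord : carrier → carrier → Prop
  S : Set carrier
  T : Set carrier
  lab : carrier → σ

namespace PreIpomset

variable {σ : Type}

/-- The precedence order is empty. -/
def Discrete (P : PreIpomset σ) : Prop := ∀ x y, ¬ P.lt x y

/-- Validity: `lt` is a strict partial order which is an interval order, `evord` is acyclic,
for distinct events exactly one of the four relations holds, sources are minimal and
targets are maximal.  (All ipomsets considered are interval.) -/
structure IsIpomset (P : PreIpomset σ) : Prop where
  lt_trans : ∀ x y z, P.lt x y → P.lt y z → P.lt x z
  lt_irrefl : ∀ x, ¬ P.lt x x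
  evord_acyclic : ∀ x, ¬ Relation.TransGen P.evord x x
  total : ∀ x y : P.carrier, x ≠ y → P.lt x y ∨ P.lt y x ∨ P.evord x y ∨ P.evord y x
  lt_not_evord : ∀ x y, P.lt x y → ¬ P.evord x y ∧ ¬ P.evord y x
  src_min : ∀ x ∈ P.S, ∀ y, ¬ P.lt y x
  tgt_max : ∀ x ∈ P.T, ∀ y, ¬ P.lt x y
  interval : ∀ w x y z, P.lt w x → P.lt y z → P.lt w z ∨ P.lt y x

/-- A conclist: a discrete ipomset with empty interfaces. -/
def IsConclist (P : PreIpomset σ) : Prop :=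
  P.IsIpomset ∧ P.Discrete ∧ P.S = ∅ ∧ P.T = ∅

/-- A starter `⟨U∖A,U,U⟩`. -/
def IsStarter (P : PreIpomset σ) : Prop := P.IsIpomset ∧ P.Discrete ∧ P.T = Set.univ

/-- A terminator `⟨U,U,U∖B⟩`. -/
def IsTerminator (P : PreIpomset σ) : Prop := P.IsIpomset ∧ P.Discrete ∧ P.S = Set.univ

/-- An identity `⟨U,U,U⟩`. -/
def IsIdentityIpomset (P : PreIpomset σ) : Prop :=
  P.IsIpomset ∧ P.Discrete ∧ P.S = Set.univ ∧ P.T = Set.univ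

def IsProperStarter (P : PreIpomset σ) : Prop := P.IsStarter ∧ P.S ≠ Set.univ

def IsProperTerminator (P : PreIpomset σ) : Prop := P.IsTerminator ∧ P.T ≠ Set.univ

/-- Isomorphism of (pre)ipomsets. -/
def Iso (P Q : PreIpomset σ) : Prop :=
  ∃ f : P.carrier ≃ Q.carrier,
    (∀ x y, P.lt x y ↔ Q.lt (f x) (f y)) ∧
    (∀ x y, P.evord x y ↔ Q.evord (f x) (f y)) ∧
    (∀ x, x ∈ P.S ↔ f x ∈ Q.S) ∧
    (∀ x, x ∈ P.T ↔ f x ∈ Q.T) ∧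
    (∀ x, Q.lab (f x) = P.lab x)

/-- Restriction to a subset of events, with empty interfaces. -/
def restrict (P : PreIpomset σ) (K : Set P.carrier) : PreIpomset σ where
  carrier := {x : P.carrier // x ∈ K}
  fin := by haveI := P.fin; exact inferInstance
  lt := fun x y => P.lt x.val y.val
  evord := fun x y => P.evord x.val y.val
  S := ∅
  T := ∅
  lab := fun x => P.lab x.val

/-- The source interface of `P` as a conclist. -/
def srcIface (P : PreIpomset σ) : PreIpomset σ := P.restrict P.S

/-- The target interface of `P` as a conclist. -/
def tgtIface (P : PreIpomset σ) : PreIpomset σ := P.restrict P.T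

/-- The underlying conclist (forget interfaces). -/
def conclistOf (P : PreIpomset σ) : PreIpomset σ := { P with S := ∅, T := ∅ }

/-- The identity ipomset `⟨U,U,U⟩` on the conclist underlying `P`. -/
def idOf (P : PreIpomset σ) : PreIpomset σ := { P with S := Set.univ, T := Set.univ }

/-- The discrete ipomset `⟨S,U,T⟩` on the conclist underlying `P`. -/
def withIfaces (P : PreIpomset σ) (S T : Set P.carrier) : PreIpomset σ :=
  { P with S := S, T := T }

/-- The starter `⟨U∖A,U,U⟩` on the conclist underlying `P`. -/
def starter (P : PreIpomset σ) (A : Set P.carrier) : PreIpomset σ :=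
  { P with S := Aᶜ, T := Set.univ }

/-- The terminator `⟨U,U,U∖B⟩` on the conclist underlying `P`. -/
def terminator (P : PreIpomset σ) (B : Set P.carrier) : PreIpomset σ :=
  { P with S := Set.univ, T := Bᶜ }

/-- A matching `T_P ≅ S_Q`, i.e. an isomorphism of interface conclists
along which `P` and `Q` may be glued. -/
structure Matching (P Q : PreIpomset σ) : Type where
  g : {x : P.carrier // x ∈ P.T} ≃ {y : Q.carrier // y ∈ Q.S}
  evord_iff : ∀ x y, P.evord x.val y.val ↔ Q.evord (g x).val (g y).val
  lab_eq : ∀ x, Q.lab (g x).val = P.lab x.val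

def gluePOf (P Q : PreIpomset σ) :
    P.carrier ⊕ {y : Q.carrier // y ∉ Q.S} → Option P.carrier
  | Sum.inl x => some x
  | Sum.inr _ => none

noncomputable def glueQOf (P Q : PreIpomset σ) (m : Matching P Q) :
    P.carrier ⊕ {y : Q.carrier // y ∉ Q.S} → Option Q.carrier
  | Sum.inl x => if h : x ∈ P.T then some (m.g ⟨x, h⟩).val else none
  | Sum.inr y => some y.val

/-- The gluing `P * Q` along a matching `T_P ≅ S_Q`. -/
noncomputable def glue (P Q : PreIpomset σ) (m : Matching P Q) : PreIpomset σ where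
  carrier := P.carrier ⊕ {y : Q.carrier // y ∉ Q.S}
  fin := by haveI := P.fin; haveI := Q.fin; exact inferInstance
  lt := fun u v =>
    (∃ x x', gluePOf P Q u = some x ∧ gluePOf P Q v = some x' ∧ P.lt x x') ∨
    (∃ y y', glueQOf P Q m u = some y ∧ glueQOf P Q m v = some y' ∧ Q.lt y y') ∨
    ((∃ x, gluePOf P Q u = some x ∧ x ∉ P.T) ∧
     (∃ y, glueQOf P Q m v = some y ∧ y ∉ Q.S))
  evord := fun u v =>
    (∃ x x', gluePOf P Q u = some x ∧ gluePOf P Q v = some x' ∧ P.evord x x') ∨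
    (∃ y y', glueQOf P Q m u = some y ∧ glueQOf P Q m v = some y' ∧ Q.evord y y')
  S := {u | ∃ x, gluePOf P Q u = some x ∧ x ∈ P.S}
  T := {u | ∃ y, glueQOf P Q m u = some y ∧ y ∈ Q.T}
  lab := Sum.elim P.lab fun y => Q.lab y.val

/-- `R` is (isomorphic to) the gluing `P * Q`; in particular `T_P ≅ S_Q`. -/
def GlueRel (P Q R : PreIpomset σ) : Prop :=
  ∃ m : Matching P Q, Iso (glue P Q m) R

/-- A choice of gluing (used when a matching is known to exist). -/
noncomputable def glueChoice (P Q : PreIpomset σ) : PreIpomset σ :=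
  if h : Nonempty (Matching P Q) then glue P Q h.some else P

/-- `GluesTo l R`: `R` is the gluing of the nonempty list `l` of ipomsets. -/
inductive GluesTo : List (PreIpomset σ) → PreIpomset σ → Prop
  | single {P R : PreIpomset σ} : Iso P R → GluesTo [P] R
  | cons {P : PreIpomset σ} {l : List (PreIpomset σ)} {R' R : PreIpomset σ} :
      GluesTo l R' → GlueRel P R' R → GluesTo (P :: l) R

/-- Proper starters and proper terminators alternate. -/
def Alternating (l : List (PreIpomset σ)) : Prop :=
  l.Chain' fun P Q => (IsProperStarter P ∧ IsProperTerminator Q) ∨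
    (IsProperTerminator P ∧ IsProperStarter Q)

/-- `l` is a sparse step decomposition of `R`: either a single identity, or an
alternating sequence of proper starters and proper terminators gluing to `R`. -/
def IsSparseDecomp (l : List (PreIpomset σ)) (R : PreIpomset σ) : Prop :=
  GluesTo l R ∧
  ((∃ I, l = [I] ∧ IsIdentityIpomset I) ∨
   ((∀ P ∈ l, IsProperStarter P ∨ IsProperTerminator P) ∧ Alternating l))

/-- `P ∈ iPoms^q`: the sparse step decomposition of `P` does not end with a
proper starter (i.e. it ends with a terminator or is a single identity). -/
def InQ (P : PreIpomset σ) : Prop :=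
  ∃ l, IsSparseDecomp l P ∧ ∀ Q, l.getLast? = some Q → ¬ IsProperStarter Q

end PreIpomset

open PreIpomset

variable {σ : Type}

/-! ### Languages and rational operations -/

def glueLang (L M : Set (PreIpomset σ)) : Set (PreIpomset σ) :=
  {R | ∃ P ∈ L, ∃ Q ∈ M, GlueRel P Q R}

def powLang (L : Set (PreIpomset σ)) : ℕ → Set (PreIpomset σ)
  | 0 => L
  | n + 1 => glueLang L (powLang L n)

/-- `L⁺ = ⋃_{n ≥ 1} Lⁿ`. -/
def plusLang (L : Set (PreIpomset σ)) : Set (PreIpomset σ) := ⋃ n, powLang L n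

/-- Rational languages of (interval) ipomsets: generated from `∅` and singletons
(up to isomorphism) of starters and terminators by union, gluing composition and plus. -/
inductive Rational : Set (PreIpomset σ) → Prop
  | empty : Rational ∅
  | single {P : PreIpomset σ} : IsStarter P ∨ IsTerminator P → Rational {Q | Iso Q P}
  | union {L M : Set (PreIpomset σ)} : Rational L → Rational M → Rational (L ∪ M)
  | concat {L M : Set (PreIpomset σ)} : Rational L → Rational M → Rational (glueLang L M)
  | plus {L : Set (PreIpomset σ)} : Rational L → Rational (plusLang L)

/-! ### P-automata -/

structure PAutomaton (σ : Type) : Type 1 where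
  Q : Type
  E : Type
  src : E → Q
  tgt : E → Q
  lab : E → PreIpomset σ
  mu : Q → PreIpomset σ
  start : Set Q
  accept : Set Q

namespace PAutomaton

variable {σ : Type}

/-- The axioms of a P-automaton: finite sets of states and transitions, states
labelled by conclists, transitions by interval ipomsets, with
`μ(s(e)) ≅ S_{λ(e)}` and `μ(t(e)) ≅ T_{λ(e)}`. -/
def IsPA (A : PAutomaton σ) : Prop :=
  Finite A.Q ∧ Finite A.E ∧
  (∀ q, (A.mu q).IsConclist) ∧ (∀ e, (A.lab e).IsIpomset) ∧
  (∀ e, Iso (A.lab e).srcIface (A.mu (A.src e))) ∧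
  (∀ e, Iso (A.lab e).tgtIface (A.mu (A.tgt e)))

/-- ST-automaton: every label is a starter or a terminator. -/
def IsST (A : PAutomaton σ) : Prop := ∀ e, IsStarter (A.lab e) ∨ IsTerminator (A.lab e)

/-- gST-automaton: every label is discrete. -/
def IsGST (A : PAutomaton σ) : Prop := ∀ e, (A.lab e).Discrete

/-- No transition is labelled by an identity. -/
def NoSilent (A : PAutomaton σ) : Prop := ∀ e, ¬ IsIdentityIpomset (A.lab e)

/-- A reduced gST-automaton: no silent transitions and conditions (a)–(f). -/
def Reduced (A : PAutomaton σ) : Prop :=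
  NoSilent A ∧
  (∀ e, A.tgt e ∉ A.start) ∧
  (∀ e, A.src e ∉ A.accept) ∧
  (∀ e, (A.lab e).T = Set.univ → A.tgt e ∈ A.accept) ∧
  (∀ e, (A.lab e).S = Set.univ → A.src e ∈ A.start) ∧
  (∀ e e', A.src e ∈ A.start → A.src e' = A.src e → e' = e) ∧
  (∀ e e', A.tgt e ∈ A.accept → A.tgt e' = A.tgt e → e' = e)

/-- Paths in a P-automaton, from a state to a state. -/
inductive Path (A : PAutomaton σ) : A.Q → A.Q → Type
  | nil (q : A.Q) : Path A q q
  | cons (e : A.E) {r : A.Q} (rest : Path A (A.tgt e) r) : Path A (A.src e) r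

/-- The (interval) ipomset recognized by a path, up to isomorphism:
the gluing of the labels of its transitions (an identity for a constant path). -/
inductive Rec {A : PAutomaton σ} : ∀ {p r : A.Q}, Path A p r → PreIpomset σ → Prop
  | nil (q : A.Q) (R : PreIpomset σ) : Iso (A.mu q).idOf R → Rec (Path.nil q) R
  | cons (e : A.E) {r : A.Q} (rest : Path A (A.tgt e) r) {R' R : PreIpomset σ} :
      Rec rest R' → GlueRel (A.lab e) R' R → Rec (Path.cons e rest) R

/-- The language of a P-automaton. -/
def lang (A : PAutomaton σ) : Set (PreIpomset σ) :=
  {R | ∃ p r, ∃ α : Path A p r, p ∈ A.start ∧ r ∈ A.accept ∧ Rec α R}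

/-- Dimension of a transition. -/
noncomputable def dim (A : PAutomaton σ) (e : A.E) : ℕ := Nat.card (A.lab e).carrier

/-- Number of bad starter transitions of dimension `n`. -/
noncomputable def bst (A : PAutomaton σ) (n : ℕ) : ℕ :=
  Nat.card {e : A.E // IsProperStarter (A.lab e) ∧ A.tgt e ∉ A.accept ∧ A.dim e = n}

/-- Number of bad terminator transitions of dimension `n`. -/
noncomputable def btt (A : PAutomaton σ) (n : ℕ) : ℕ :=
  Nat.card {e : A.E // IsProperTerminator (A.lab e) ∧ A.src e ∉ A.start ∧ A.dim e = n}

/-- The automaton `𝒜_c`: remove the starter transition `c`; for every transition `e`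
out of `t(c)` add a transition `e*` from `s(c)` to `t(e)` labelled `λ(c) * λ(e)`. -/
noncomputable def Ac (A : PAutomaton σ) (c : A.E) : PAutomaton σ where
  Q := A.Q
  E := {e : A.E // e ≠ c} ⊕ {e : A.E // A.src e = A.tgt c}
  src := Sum.elim (fun e => A.src e.val) fun _ => A.src c
  tgt := Sum.elim (fun e => A.tgt e.val) fun e => A.tgt e.val
  lab := Sum.elim (fun e => A.lab e.val) fun e => glueChoice (A.lab c) (A.lab e.val)
  mu := A.mu
  start := A.start
  accept := A.accept

/-- Disjoint union of two P-automata. -/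
def sumAut (A B : PAutomaton σ) : PAutomaton σ where
  Q := A.Q ⊕ B.Q
  E := A.E ⊕ B.E
  src := Sum.elim (Sum.inl ∘ A.src) (Sum.inr ∘ B.src)
  tgt := Sum.elim (Sum.inl ∘ A.tgt) (Sum.inr ∘ B.tgt)
  lab := Sum.elim A.lab B.lab
  mu := Sum.elim A.mu B.mu
  start := Sum.inl '' A.start ∪ Sum.inr '' B.start
  accept := Sum.inl '' A.accept ∪ Sum.inr '' B.accept

/-- Concatenation `𝒜 * ℬ`: disjoint union together with identity-labelled transitions
from accepting states of `𝒜` to initial states of `ℬ` with isomorphic state labels. -/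
def concatAut (A B : PAutomaton σ) : PAutomaton σ where
  Q := A.Q ⊕ B.Q
  E := A.E ⊕ B.E ⊕
    {pq : A.Q × B.Q // pq.1 ∈ A.accept ∧ pq.2 ∈ B.start ∧ Iso (A.mu pq.1) (B.mu pq.2)}
  src := Sum.elim (Sum.inl ∘ A.src)
    (Sum.elim (Sum.inr ∘ B.src) fun pq => Sum.inl pq.val.1)
  tgt := Sum.elim (Sum.inl ∘ A.tgt)
    (Sum.elim (Sum.inr ∘ B.tgt) fun pq => Sum.inr pq.val.2)
  lab := Sum.elim A.lab (Sum.elim B.lab fun pq => (A.mu pq.val.1).idOf)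
  mu := Sum.elim A.mu B.mu
  start := Sum.inl '' A.start
  accept := Sum.inr '' B.accept

/-- Kleene plus `𝒜⁺`: add identity-labelled transitions from accepting states
to initial states with isomorphic state labels. -/
def plusAut (A : PAutomaton σ) : PAutomaton σ where
  Q := A.Q
  E := A.E ⊕
    {pq : A.Q × A.Q // pq.1 ∈ A.accept ∧ pq.2 ∈ A.start ∧ Iso (A.mu pq.1) (A.mu pq.2)}
  src := Sum.elim A.src fun pq => pq.val.1
  tgt := Sum.elim A.tgt fun pq => pq.val.2
  lab := Sum.elim A.lab fun pq => (A.mu pq.val.1).idOf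
  mu := A.mu
  start := A.start
  accept := A.accept

end PAutomaton

/-! ### Partial HDAs -/

/-- `g` exhibits `V` as the sub-conclist of `U` obtained by removing the events in `K`. -/
def IsFaceEmbed (U : PreIpomset σ) (K : Set U.carrier) (V : PreIpomset σ)
    (g : V.carrier → U.carrier) : Prop :=
  Function.Injective g ∧ Set.range g = Kᶜ ∧
  (∀ u v, V.evord u v ↔ U.evord (g u) (g v)) ∧
  (∀ u, U.lab (g u) = V.lab u)

/-- The data of a partial higher-dimensional automaton: cells labelled by conclists,
partial face maps, initial and accepting cells. -/
structure PrePHDA (σ : Type) : Type 1 where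
  cell : Type
  ev : cell → PreIpomset σ
  face : (x : cell) → Set (ev x).carrier → Set (ev x).carrier → Option cell
  start : Set cell
  accept : Set cell

namespace PrePHDA

variable {σ : Type}

/-- The lax precubical identity: whenever `δ_{A,B}(x)` and `δ_{C,D}(δ_{A,B}(x))` are
defined, `δ_{A∪C,B∪D}(x)` is defined and equal to the composite. -/
def IsLax (X : PrePHDA σ) : Prop :=
  ∀ x (A B : Set (X.ev x).carrier) y, X.face x A B = some y →
    ∀ g, IsFaceEmbed (X.ev x) (A ∪ B) (X.ev y) g →
      ∀ (C D : Set (X.ev y).carrier) z, X.face y C D = some z →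
        X.face x (A ∪ g '' C) (B ∪ g '' D) = some z

/-- The axioms of a partial HDA. -/
def IsPHDA (X : PrePHDA σ) : Prop :=
  (∀ x, (X.ev x).IsConclist) ∧
  (∀ x, X.face x ∅ ∅ = some x) ∧
  (∀ x A B y, X.face x A B = some y →
    Disjoint A B ∧ ∃ g, IsFaceEmbed (X.ev x) (A ∪ B) (X.ev y) g) ∧
  IsLax X

/-- Strictness: `δ_{C,D} ∘ δ_{A,B} = δ_{A∪C,B∪D}` as partial functions. -/
def IsStrict (X : PrePHDA σ) : Prop :=
  IsPHDA X ∧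
  (∀ x (A B : Set (X.ev x).carrier) y, X.face x A B = some y →
    ∀ g, IsFaceEmbed (X.ev x) (A ∪ B) (X.ev y) g →
      ∀ C D : Set (X.ev y).carrier,
        X.face x (A ∪ g '' C) (B ∪ g '' D) = X.face y C D) ∧
  (∀ x (A B C D : Set (X.ev x).carrier),
    Disjoint (A ∪ C) (B ∪ D) → C ∪ D ⊆ (A ∪ B)ᶜ →
    X.face x A B = none → X.face x (A ∪ C) (B ∪ D) = none)

/-- Paths in a partial HDA: sequences of upsteps and downsteps. -/
inductive Path (X : PrePHDA σ) : X.cell → X.cell → Type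
  | nil (x : X.cell) : Path X x x
  | up {x z : X.cell} (y : X.cell) (A : Set (X.ev y).carrier)
      (h : X.face y A ∅ = some x) (rest : Path X y z) : Path X x z
  | down {z w : X.cell} (y : X.cell) (B : Set (X.ev y).carrier)
      (h : X.face y ∅ B = some z) (rest : Path X z w) : Path X y w

/-- Directions of the steps of a path (`true` = upstep). -/
def Path.dirs {X : PrePHDA σ} : {x z : X.cell} → Path X x z → List Bool
  | _, _, .nil _ => []
  | _, _, .up _ _ _ rest => true :: rest.dirs
  | _, _, .down _ _ _ rest => false :: rest.dirs

/-- A path is sparse if upsteps and downsteps alternate. -/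
def Path.Sparse {X : PrePHDA σ} {x z : X.cell} (α : Path X x z) : Prop :=
  α.dirs.Chain' (· ≠ ·)

/-- Concatenation of paths. -/
def Path.comp {X : PrePHDA σ} : {x y z : X.cell} → Path X x y → Path X y z → Path X x z
  | _, _, _, .nil _, β => β
  | _, _, _, .up y A h rest, β => .up y A h (rest.comp β)
  | _, _, _, .down y B h rest, β => .down y B h (rest.comp β)

/-- The ipomset recognized by a path, up to isomorphism: the gluing of the starters
and terminators of its steps (an identity for a constant path). -/
inductive Rec {X : PrePHDA σ} : ∀ {x z : X.cell}, Path X x z → PreIpomset σ → Prop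
  | nil (x : X.cell) (R : PreIpomset σ) :
      Iso (X.ev x).idOf R → Rec (Path.nil x) R
  | up {x z : X.cell} (y : X.cell) (A : Set (X.ev y).carrier)
      (h : X.face y A ∅ = some x) (rest : Path X y z) {R' R : PreIpomset σ} :
      Rec rest R' → GlueRel ((X.ev y).starter A) R' R → Rec (Path.up y A h rest) R
  | down {z w : X.cell} (y : X.cell) (B : Set (X.ev y).carrier)
      (h : X.face y ∅ B = some z) (rest : Path X z w) {R' R : PreIpomset σ} :
      Rec rest R' → GlueRel ((X.ev y).terminator B) R' R → Rec (Path.down y B h rest) R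

/-- The language of a partial HDA. -/
def lang (X : PrePHDA σ) : Set (PreIpomset σ) :=
  {R | ∃ x z, ∃ α : Path X x z, x ∈ X.start ∧ z ∈ X.accept ∧ Rec α R}

/-- `X(K,P)`: cells reachable from `K` by a path recognizing `P`. -/
def track (X : PrePHDA σ) (K : Set X.cell) (P : PreIpomset σ) : Set X.cell :=
  {x | ∃ s, ∃ α : Path X s x, s ∈ K ∧ Rec α P}

/-- Deterministic partial HDA: at most one initial cell per conclist, and lower
face maps are "injective" in the appropriate sense. -/
def Deterministic (X : PrePHDA σ) : Prop :=
  (∀ x y, x ∈ X.start → y ∈ X.start → Iso (X.ev x) (X.ev y) → x = y) ∧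
  (∀ (y y' : X.cell) (A : Set (X.ev y).carrier) (A' : Set (X.ev y').carrier)
      (x : X.cell), X.face y A ∅ = some x → X.face y' A' ∅ = some x →
    (∃ f : (X.ev y).carrier ≃ (X.ev y').carrier,
      (∀ u v, (X.ev y).evord u v ↔ (X.ev y').evord (f u) (f v)) ∧
      (∀ u, (X.ev y').lab (f u) = (X.ev y).lab u) ∧ f '' A = A') → y = y')

end PrePHDA

/-! ### Relational HDAs -/

/-- The data of a relational HDA: face relations instead of partial face maps. -/
structure PreRHDA (σ : Type) : Type 1 where
  cell : Type
  ev : cell → PreIpomset σ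
  face : (x : cell) → Set (ev x).carrier → Set (ev x).carrier → Set cell
  start : Set cell
  accept : Set cell

namespace PreRHDA

variable {σ : Type}

/-- The axioms of a relational HDA, with the lax precubical identity
`δ_{C,D} ∘ δ_{A,B} ⊆ δ_{A∪C,B∪D}`. -/
def IsRHDA (X : PreRHDA σ) : Prop :=
  (∀ x, (X.ev x).IsConclist) ∧
  (∀ x, X.face x ∅ ∅ = {x}) ∧
  (∀ x A B y, y ∈ X.face x A B →
    Disjoint A B ∧ ∃ g, IsFaceEmbed (X.ev x) (A ∪ B) (X.ev y) g) ∧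
  (∀ x (A B : Set (X.ev x).carrier) y, y ∈ X.face x A B →
    ∀ g, IsFaceEmbed (X.ev x) (A ∪ B) (X.ev y) g →
      ∀ (C D : Set (X.ev y).carrier) z, z ∈ X.face y C D →
        z ∈ X.face x (A ∪ g '' C) (B ∪ g '' D))

/-- Paths in a relational HDA. -/
inductive Path (X : PreRHDA σ) : X.cell → X.cell → Type 1
  | nil (x : X.cell) : Path X x x
  | up {x z : X.cell} (y : X.cell) (A : Set (X.ev y).carrier)
      (h : x ∈ X.face y A ∅) (rest : Path X y z) : Path X x z
  | down {z w : X.cell} (y : X.cell) (B : Set (X.ev y).carrier)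
      (h : z ∈ X.face y ∅ B) (rest : Path X z w) : Path X y w

/-- The ipomset recognized by a path in a relational HDA. -/
inductive Rec {X : PreRHDA σ} : ∀ {x z : X.cell}, Path X x z → PreIpomset σ → Prop
  | nil (x : X.cell) (R : PreIpomset σ) :
      Iso (X.ev x).idOf R → Rec (Path.nil x) R
  | up {x z : X.cell} (y : X.cell) (A : Set (X.ev y).carrier)
      (h : x ∈ X.face y A ∅) (rest : Path X y z) {R' R : PreIpomset σ} :
      Rec rest R' → GlueRel ((X.ev y).starter A) R' R → Rec (Path.up y A h rest) R
  | down {z w : X.cell} (y : X.cell) (B : Set (X.ev y).carrier)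
      (h : z ∈ X.face y ∅ B) (rest : Path X z w) {R' R : PreIpomset σ} :
      Rec rest R' → GlueRel ((X.ev y).terminator B) R' R → Rec (Path.down y B h rest) R

/-- The language of a relational HDA. -/
def lang (X : PreRHDA σ) : Set (PreIpomset σ) :=
  {R | ∃ x z, ∃ α : Path X x z, x ∈ X.start ∧ z ∈ X.accept ∧ Rec α R}

/-- The ST-automaton `ST(X)` of a relational HDA `X`: states are cells, transitions
mimic the starting and terminating of events. -/
def stAut (X : PreRHDA σ) : PAutomaton σ where
  Q := X.cell
  E := (Σ q : X.cell, Σ A : Set (X.ev q).carrier, {p : X.cell // p ∈ X.face q A ∅}) ⊕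
       (Σ q : X.cell, Σ B : Set (X.ev q).carrier, {r : X.cell // r ∈ X.face q ∅ B})
  src := Sum.elim (fun t => t.2.2.val) fun t => t.1
  tgt := Sum.elim (fun t => t.1) fun t => t.2.2.val
  lab := Sum.elim (fun t => (X.ev t.1).starter t.2.1) fun t => (X.ev t.1).terminator t.2.1
  mu := X.ev
  start := X.start
  accept := X.accept

end PreRHDA

/-! ### The partial HDA of a reduced gST-automaton -/

open PAutomaton

/-- The cell representing a state `q` in `X(𝒜)`: `q` is merged with a terminator
transition out of it or a starter transition into it, if such exists. -/
noncomputable def cellOfState (A : PAutomaton σ) (q : A.Q) : A.E ⊕ A.Q :=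
  if h : ∃ e, IsTerminator (A.lab e) ∧ A.src e = q then Sum.inl h.choose
  else if h' : ∃ e, IsStarter (A.lab e) ∧ A.tgt e = q then Sum.inl h'.choose
  else Sum.inr q

/-- `X(𝒜)`: cells are `(Q ⊔ E)/∼`, with the only defined (nontrivial) face maps
`δ⁰_{U∖S}([e]) = [s(e)]` and `δ¹_{U∖T}([e]) = [t(e)]` for `λ(e) = ⟨S,U,T⟩`. -/
noncomputable def XofA (A : PAutomaton σ) : PrePHDA σ where
  cell := A.E ⊕ A.Q
  ev := Sum.elim (fun e => (A.lab e).conclistOf) A.mu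
  face := fun x =>
    match x with
    | Sum.inl e => fun As Bs =>
        if As = ∅ ∧ Bs = ∅ then some (Sum.inl e)
        else if As = (A.lab e).Sᶜ ∧ Bs = ∅ then some (cellOfState A (A.src e))
        else if As = ∅ ∧ Bs = (A.lab e).Tᶜ then some (cellOfState A (A.tgt e))
        else none
    | Sum.inr q => fun As Bs =>
        if As = ∅ ∧ Bs = ∅ then some (Sum.inr q) else none
  start := cellOfState A '' A.start
  accept := cellOfState A '' A.accept

end HDA

/-!
A path of `𝒜 * ℬ` from an initial to an accepting state runs through `𝒜` up to an accepting
state `p`, takes a single bridge `p → q` labelled `id_{μ(p)}`, and continues in `ℬ`. It recognizes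
`P * (id * Q) ≅ P * Q`, where `P` and `Q` are recognized by its two halves; conversely, if accepted
words `P` and `Q` glue, then `μ(p) ≅ T_P ≅ S_Q ≅ μ(q)`, so the bridge exists. Moving the brackets
uses that gluing is associative up to isomorphism and respects isomorphisms of the factors.

Both facts are proved by reading a gluing through the partial projections of its events to the
factors (an interface event of `T_P ≅ S_Q` lies in both). In a threefold gluing, `u` precedes `v`
across factors exactly when every factor containing `u` comes before every factor containing `v`,
a description that does not depend on the bracketing.
-/

namespace HDA

namespace PreIpomset

variable {σ : Type}

section Iso

variable {P Q R : PreIpomset σ}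

structure IsIsoEquiv (f : P.carrier ≃ Q.carrier) : Prop where
  lt_iff : ∀ x y, P.lt x y ↔ Q.lt (f x) (f y)
  evord_iff : ∀ x y, P.evord x y ↔ Q.evord (f x) (f y)
  mem_S : ∀ x, x ∈ P.S ↔ f x ∈ Q.S
  mem_T : ∀ x, x ∈ P.T ↔ f x ∈ Q.T
  lab_apply : ∀ x, Q.lab (f x) = P.lab x

theorem iso_iff : Iso P Q ↔ ∃ f : P.carrier ≃ Q.carrier, IsIsoEquiv f :=
  ⟨fun ⟨f, h1, h2, h3, h4, h5⟩ => ⟨f, h1, h2, h3, h4, h5⟩,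
    fun ⟨f, h1, h2, h3, h4, h5⟩ => ⟨f, h1, h2, h3, h4, h5⟩⟩

theorem IsIsoEquiv.symm {f : P.carrier ≃ Q.carrier} (hf : IsIsoEquiv f) : IsIsoEquiv f.symm where
  lt_iff x y := by rw [hf.lt_iff, f.apply_symm_apply, f.apply_symm_apply]
  evord_iff x y := by rw [hf.evord_iff, f.apply_symm_apply, f.apply_symm_apply]
  mem_S x := by rw [hf.mem_S, f.apply_symm_apply]
  mem_T x := by rw [hf.mem_T, f.apply_symm_apply]
  lab_apply x := by rw [← hf.lab_apply, f.apply_symm_apply]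

theorem IsIsoEquiv.trans {f : P.carrier ≃ Q.carrier} {g : Q.carrier ≃ R.carrier}
    (hf : IsIsoEquiv f) (hg : IsIsoEquiv g) : IsIsoEquiv (f.trans g) where
  lt_iff x y := (hf.lt_iff x y).trans (hg.lt_iff _ _)
  evord_iff x y := (hf.evord_iff x y).trans (hg.evord_iff _ _)
  mem_S x := (hf.mem_S x).trans (hg.mem_S _)
  mem_T x := (hf.mem_T x).trans (hg.mem_T _)
  lab_apply x := (hg.lab_apply _).trans (hf.lab_apply x)

theorem Iso.refl (P : PreIpomset σ) : Iso P P :=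
  ⟨Equiv.refl _, fun _ _ => Iff.rfl, fun _ _ => Iff.rfl, fun _ => Iff.rfl, fun _ => Iff.rfl,
    fun _ => rfl⟩

theorem Iso.symm (h : Iso P Q) : Iso Q P :=
  let ⟨f, hf⟩ := iso_iff.mp h
  iso_iff.mpr ⟨f.symm, hf.symm⟩

theorem Iso.trans (h : Iso P Q) (h' : Iso Q R) : Iso P R :=
  let ⟨f, hf⟩ := iso_iff.mp h
  let ⟨g, hg⟩ := iso_iff.mp h'
  iso_iff.mpr ⟨f.trans g, hf.trans hg⟩

theorem Iso.tgtIface (h : Iso P Q) : Iso P.tgtIface Q.tgtIface := by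
  obtain ⟨f, hf⟩ := iso_iff.mp h
  exact ⟨f.subtypeEquiv hf.mem_T, fun x y => hf.lt_iff x.1 y.1, fun x y => hf.evord_iff x.1 y.1,
    fun _ => Iff.rfl, fun _ => Iff.rfl, fun x => hf.lab_apply x.1⟩

theorem Iso.srcIface (h : Iso P Q) : Iso P.srcIface Q.srcIface := by
  obtain ⟨f, hf⟩ := iso_iff.mp h
  exact ⟨f.subtypeEquiv hf.mem_S, fun x y => hf.lt_iff x.1 y.1, fun x y => hf.evord_iff x.1 y.1,
    fun _ => Iff.rfl, fun _ => Iff.rfl, fun x => hf.lab_apply x.1⟩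

end Iso

section Extremal

variable {P Q U : PreIpomset σ}

def IfacesExtremal (P : PreIpomset σ) : Prop :=
  (∀ x ∈ P.S, ∀ y, ¬ P.lt y x) ∧ (∀ x ∈ P.T, ∀ y, ¬ P.lt x y)

theorem IsIpomset.ifacesExtremal (h : P.IsIpomset) : IfacesExtremal P :=
  ⟨h.src_min, h.tgt_max⟩

theorem Discrete.ifacesExtremal (h : P.Discrete) : IfacesExtremal P :=
  ⟨fun _ _ y => h y _, fun x _ y => h x y⟩

theorem Iso.ifacesExtremal (h : Iso P Q) (hP : IfacesExtremal P) : IfacesExtremal Q := by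
  obtain ⟨f, hf⟩ := iso_iff.mp h
  refine ⟨fun x hx y hy => hP.1 (f.symm x) ?_ (f.symm y) ?_,
    fun x hx y hy => hP.2 (f.symm x) ?_ (f.symm y) ?_⟩ <;>
  simpa [hf.mem_S, hf.mem_T, hf.lt_iff]

theorem Discrete.idOf (h : P.Discrete) : P.idOf.Discrete := h

theorem IsConclist.isIpomset_idOf (h : U.IsConclist) : U.idOf.IsIpomset := by
  obtain ⟨hi, hd, -, -⟩ := h
  exact ⟨hi.lt_trans, hi.lt_irrefl, hi.evord_acyclic, hi.total, hi.lt_not_evord,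
    fun x _ y hy => hd y x hy, fun x _ y hy => hd x y hy, hi.interval⟩

theorem IsConclist.tgtIface_idOf (h : U.IsConclist) : Iso U.idOf.tgtIface U :=
  ⟨Equiv.subtypeUnivEquiv Set.mem_univ, fun _ _ => Iff.rfl, fun _ _ => Iff.rfl,
    fun _ => by rw [h.2.2.1]; exact Iff.rfl, fun _ => by rw [h.2.2.2]; exact Iff.rfl,
    fun _ => rfl⟩

theorem IsConclist.srcIface_idOf (h : U.IsConclist) : Iso U.idOf.srcIface U :=
  ⟨Equiv.subtypeUnivEquiv Set.mem_univ, fun _ _ => Iff.rfl, fun _ _ => Iff.rfl,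
    fun _ => by rw [h.2.2.1]; exact Iff.rfl, fun _ => by rw [h.2.2.2]; exact Iff.rfl,
    fun _ => rfl⟩

end Extremal

section LiftRel

variable {X X' Y Y' Z : Type} {p : X → Option Y} {u v : X}

def LiftRel (r : Y → Y → Prop) (p : X → Option Y) (u v : X) : Prop :=
  ∃ y y', p u = some y ∧ p v = some y' ∧ r y y'

theorem liftRel_iff_of_eq_some {r : Y → Y → Prop} {y y' : Y} (hu : p u = some y)
    (hv : p v = some y') : LiftRel r p u v ↔ r y y' := by
  simp [LiftRel, hu, hv]

theorem liftRel_or {r s : Y → Y → Prop} :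
    LiftRel (fun y y' => r y y' ∨ s y y') p u v ↔ LiftRel r p u v ∨ LiftRel s p u v := by
  simp only [LiftRel]
  constructor
  · rintro ⟨y, y', hu, hv, h | h⟩
    exacts [Or.inl ⟨y, y', hu, hv, h⟩, Or.inr ⟨y, y', hu, hv, h⟩]
  · rintro (⟨y, y', hu, hv, h⟩ | ⟨y, y', hu, hv, h⟩)
    exacts [⟨y, y', hu, hv, Or.inl h⟩, ⟨y, y', hu, hv, Or.inr h⟩]

theorem liftRel_and {A B : Y → Prop} :
    LiftRel (fun y y' => A y ∧ B y') p u v ↔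
      (∃ y, p u = some y ∧ A y) ∧ ∃ y', p v = some y' ∧ B y' := by
  simp only [LiftRel]
  constructor
  · rintro ⟨y, y', hu, hv, hy, hy'⟩
    exact ⟨⟨y, hu, hy⟩, y', hv, hy'⟩
  · rintro ⟨⟨y, hu, hy⟩, y', hv, hy'⟩
    exact ⟨y, y', hu, hv, hy, hy'⟩

theorem liftRel_bind {r : Z → Z → Prop} {q : Y → Option Z} :
    LiftRel r (fun u => (p u).bind q) u v ↔ LiftRel (LiftRel r q) p u v := by
  simp only [LiftRel, Option.bind_eq_some_iff]
  constructor
  · rintro ⟨z, z', ⟨y, hu, hy⟩, ⟨y', hv, hy'⟩, h⟩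
    exact ⟨y, y', hu, hv, z, z', hy, hy', h⟩
  · rintro ⟨y, y', hu, hv, z, z', hy, hy', h⟩
    exact ⟨z, z', ⟨y, hu, hy⟩, ⟨y', hv, hy'⟩, h⟩

theorem liftRel_congr {r : Y → Y → Prop} {r' : Y' → Y' → Prop} {p' : X' → Option Y'}
    {E : X → X'} {g : Y → Y'} (hp : ∀ u, p' (E u) = (p u).map g)
    (hr : ∀ y y', r y y' ↔ r' (g y) (g y')) (u v : X) :
    LiftRel r' p' (E u) (E v) ↔ LiftRel r p u v := by
  simp only [LiftRel, hp, Option.map_eq_some_iff]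
  constructor
  · rintro ⟨-, -, ⟨y, hu, rfl⟩, ⟨y', hv, rfl⟩, h⟩
    exact ⟨y, y', hu, hv, (hr y y').mpr h⟩
  · rintro ⟨y, y', hu, hv, h⟩
    exact ⟨g y, g y', ⟨y, hu, rfl⟩, ⟨y', hv, rfl⟩, (hr y y').mp h⟩

end LiftRel

namespace Matching

variable {P Q : PreIpomset σ}

theorem tgtIface_iso_srcIface (m : Matching P Q) (hP : IfacesExtremal P)
    (hQ : IfacesExtremal Q) : Iso P.tgtIface Q.srcIface :=
  ⟨m.g, fun x y => iff_of_false (hP.2 _ x.2 _) (hQ.1 _ (m.g y).2 _), fun x y => m.evord_iff x y,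
    fun _ => Iff.rfl, fun _ => Iff.rfl, fun x => m.lab_eq x⟩

variable (m : Matching P Q)

noncomputable def fwd (x : P.carrier) : Option Q.carrier :=
  if h : x ∈ P.T then some (m.g ⟨x, h⟩).val else none

variable {m} {x x' : P.carrier} {y y' : Q.carrier}

theorem fwd_eq_some : m.fwd x = some y ↔ ∃ h : x ∈ P.T, (m.g ⟨x, h⟩).val = y := by
  unfold fwd
  split_ifs with h <;> simp [h]

theorem fwd_eq_none : m.fwd x = none ↔ x ∉ P.T := by
  unfold fwd
  split_ifs with h <;> simp [h]

theorem mem_S_of_fwd_eq_some (h : m.fwd x = some y) : y ∈ Q.S := by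
  obtain ⟨hx, rfl⟩ := fwd_eq_some.mp h
  exact (m.g _).2

theorem evord_iff_of_fwd_eq_some (h : m.fwd x = some y) (h' : m.fwd x' = some y') :
    P.evord x x' ↔ Q.evord y y' := by
  obtain ⟨hx, rfl⟩ := fwd_eq_some.mp h
  obtain ⟨hx', rfl⟩ := fwd_eq_some.mp h'
  exact m.evord_iff ⟨x, hx⟩ ⟨x', hx'⟩

theorem lab_eq_of_fwd_eq_some (h : m.fwd x = some y) : Q.lab y = P.lab x := by
  obtain ⟨hx, rfl⟩ := fwd_eq_some.mp h
  exact m.lab_eq ⟨x, hx⟩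

theorem eq_of_fwd_eq_some (h : m.fwd x = some y) (h' : m.fwd x' = some y) : x = x' := by
  obtain ⟨hx, rfl⟩ := fwd_eq_some.mp h
  obtain ⟨hx', hxy⟩ := fwd_eq_some.mp h'
  exact congrArg Subtype.val (m.g.injective (Subtype.ext hxy.symm))

theorem fwd_symm_apply (y : {y // y ∈ Q.S}) : m.fwd (m.g.symm y).val = some y.val :=
  fwd_eq_some.mpr ⟨(m.g.symm y).2, by simp⟩

end Matching

section Projections

variable {P Q : PreIpomset σ} (m : Matching P Q)

-- `gluePOf` and `glueQOf`, typed on the carrier of the gluing so that rewriting never has to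
-- unfold `glue`.
def projL : (glue P Q m).carrier → Option P.carrier := gluePOf P Q

noncomputable def projR : (glue P Q m).carrier → Option Q.carrier := glueQOf P Q m

variable {m} {x : P.carrier} {u v : (glue P Q m).carrier}

@[simp] theorem projL_inl : projL m (Sum.inl x) = some x := rfl

@[simp] theorem projL_inr (y : {y // y ∉ Q.S}) : projL m (Sum.inr y) = none := rfl

@[simp] theorem projR_inl : projR m (Sum.inl x) = m.fwd x := rfl

@[simp] theorem projR_inr (y : {y // y ∉ Q.S}) : projR m (Sum.inr y) = some y.val := rfl

theorem projR_eq_none_iff : projR m u = none ↔ ∃ x, projL m u = some x ∧ x ∉ P.T := by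
  cases u <;> simp [Matching.fwd_eq_none]

theorem projL_eq_none_iff : projL m u = none ↔ ∃ y, projR m u = some y ∧ y ∉ Q.S := by
  rcases u with x | y
  · simpa using fun y h => Matching.mem_S_of_fwd_eq_some h
  · simpa using y.2

theorem projR_ne_none_of_projL_eq_none (h : projL m u = none) : projR m u ≠ none := by
  obtain ⟨y, hy, -⟩ := projL_eq_none_iff.mp h
  simp [hy]

theorem projL_ne_none_of_projR_eq_none (h : projR m u = none) : projL m u ≠ none := by
  obtain ⟨x, hx, -⟩ := projR_eq_none_iff.mp h
  simp [hx]

theorem projR_of_projL (h : projL m u = some x) : projR m u = m.fwd x := by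
  cases u <;> simp_all

theorem projR_injective {y : Q.carrier} (hu : projR m u = some y) (hv : projR m v = some y) :
    u = v := by
  rcases u with x | ⟨y₁, hy₁⟩ <;> rcases v with x' | ⟨y₂, hy₂⟩ <;>
    simp only [projR_inl, projR_inr, Option.some.injEq] at hu hv
  · rw [Matching.eq_of_fwd_eq_some hu hv]
  · exact absurd (hv ▸ Matching.mem_S_of_fwd_eq_some hu) hy₂
  · exact absurd (hu ▸ Matching.mem_S_of_fwd_eq_some hv) hy₁
  · subst hu hv
    rfl

theorem glue_lt_iff : (glue P Q m).lt u v ↔ LiftRel P.lt (projL m) u v ∨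
    LiftRel Q.lt (projR m) u v ∨ (projR m u = none ∧ projL m v = none) := by
  rw [projR_eq_none_iff, projL_eq_none_iff (u := v)]
  rfl

theorem glue_evord_iff : (glue P Q m).evord u v ↔ LiftRel P.evord (projL m) u v ∨
    LiftRel Q.evord (projR m) u v := Iff.rfl

theorem mem_glue_S : u ∈ (glue P Q m).S ↔ ∃ x, projL m u = some x ∧ x ∈ P.S := Iff.rfl

theorem mem_glue_T : u ∈ (glue P Q m).T ↔ ∃ y, projR m u = some y ∧ y ∈ Q.T := Iff.rfl

theorem inl_mem_glue_S : (Sum.inl x : (glue P Q m).carrier) ∈ (glue P Q m).S ↔ x ∈ P.S :=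
  mem_glue_S.trans ⟨fun ⟨_, h, hx⟩ => Option.some.inj h ▸ hx, fun hx => ⟨x, rfl, hx⟩⟩

theorem inr_notMem_glue_S (y : {y // y ∉ Q.S}) :
    (Sum.inr y : (glue P Q m).carrier) ∉ (glue P Q m).S := by
  intro h
  obtain ⟨_, h, -⟩ := mem_glue_S.mp h
  cases h

theorem glue_evord_of_projL {x' : P.carrier} (hu : projL m u = some x) (hv : projL m v = some x') :
    (glue P Q m).evord u v ↔ P.evord x x' := by
  rw [glue_evord_iff, liftRel_iff_of_eq_some hu hv, or_iff_left_of_imp]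
  rintro ⟨y, y', hy, hy', h⟩
  rw [projR_of_projL hu] at hy
  rw [projR_of_projL hv] at hy'
  exact (Matching.evord_iff_of_fwd_eq_some hy hy').mpr h

theorem glue_evord_of_projR {y y' : Q.carrier} (hu : projR m u = some y)
    (hv : projR m v = some y') : (glue P Q m).evord u v ↔ Q.evord y y' := by
  rw [glue_evord_iff, liftRel_iff_of_eq_some hu hv, or_iff_right_of_imp]
  rintro ⟨x, x', hx, hx', h⟩
  rw [projR_of_projL hx] at hu
  rw [projR_of_projL hx'] at hv
  exact (Matching.evord_iff_of_fwd_eq_some hu hv).mp h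

theorem glue_lab_of_projL (h : projL m u = some x) : (glue P Q m).lab u = P.lab x := by
  cases u <;> simp_all [glue]

theorem glue_lab_of_projR {y : Q.carrier} (h : projR m u = some y) :
    (glue P Q m).lab u = Q.lab y := by
  rcases u with x | y
  · exact (Matching.lab_eq_of_fwd_eq_some h).symm
  · simp_all [glue]

end Projections

section Interfaces

variable {P Q : PreIpomset σ} (m : Matching P Q)

theorem ifacesExtremal_glue (hP : IfacesExtremal P) (hQ : IfacesExtremal Q) :
    IfacesExtremal (glue P Q m) := by
  constructor
  · intro u hu v hvu
    obtain ⟨x, hux, hx⟩ := mem_glue_S.mp hu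
    rcases glue_lt_iff.mp hvu with ⟨x', x'', -, hu, h⟩ | ⟨y', y, -, hu, h⟩ | ⟨-, hu⟩
    · exact hP.1 x hx x' (Option.some.inj (hux.symm.trans hu) ▸ h)
    · rw [projR_of_projL hux] at hu
      exact hQ.1 y (Matching.mem_S_of_fwd_eq_some hu) y' h
    · simp_all
  · intro u hu v huv
    obtain ⟨y, huy, hy⟩ := mem_glue_T.mp hu
    rcases glue_lt_iff.mp huv with ⟨x, x', hu, -, h⟩ | ⟨y', y'', hu, -, h⟩ | ⟨hu, -⟩
    · rw [projR_of_projL hu] at huy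
      exact hP.2 x (Matching.fwd_eq_some.mp huy).1 x' h
    · exact hQ.2 y hy y'' (Option.some.inj (huy.symm.trans hu) ▸ h)
    · simp_all

noncomputable def glueTgtFun (u : {u // u ∈ (glue P Q m).T}) : {y // y ∈ Q.T} :=
  ⟨_, (mem_glue_T.mp u.2).choose_spec.2⟩

theorem projR_glueTgtFun (u : {u // u ∈ (glue P Q m).T}) :
    projR m u.val = some (glueTgtFun m u).val :=
  (mem_glue_T.mp u.2).choose_spec.1

theorem glueTgtFun_bijective : Function.Bijective (glueTgtFun m) := by
  refine ⟨fun u v h => Subtype.ext (projR_injective (projR_glueTgtFun m u)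
    (h ▸ projR_glueTgtFun m v)), fun y => ?_⟩
  have hy : ∃ u, projR m u = some y.val := by
    by_cases hyS : y.val ∈ Q.S
    · exact ⟨Sum.inl (m.g.symm ⟨y, hyS⟩).val, m.fwd_symm_apply _⟩
    · exact ⟨Sum.inr ⟨y, hyS⟩, rfl⟩
  obtain ⟨u, hu⟩ := hy
  exact ⟨⟨u, y, hu, y.2⟩, Subtype.ext (Option.some.inj ((projR_glueTgtFun m _).symm.trans hu))⟩

noncomputable def glueTgtEquiv : {u // u ∈ (glue P Q m).T} ≃ {y // y ∈ Q.T} :=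
  Equiv.ofBijective _ (glueTgtFun_bijective m)

theorem projR_glueTgtEquiv (u : {u // u ∈ (glue P Q m).T}) :
    projR m u.val = some (glueTgtEquiv m u).val :=
  projR_glueTgtFun m u

theorem glue_S_eq : (glue P Q m).S = Sum.inl '' P.S := by
  ext u
  rcases u with x | y
  · exact inl_mem_glue_S.trans Sum.inl_injective.mem_set_image.symm
  · refine iff_of_false (inr_notMem_glue_S y) ?_
    rintro ⟨x, -, h⟩
    cases h

noncomputable def glueSrcEquiv : {u // u ∈ (glue P Q m).S} ≃ {x // x ∈ P.S} :=
  (Equiv.setCongr (glue_S_eq m)).trans (Equiv.Set.image _ _ Sum.inl_injective).symm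

theorem coe_eq_inl_glueSrcEquiv (u : {u // u ∈ (glue P Q m).S}) :
    u.val = Sum.inl (glueSrcEquiv m u).val := by
  obtain ⟨x, rfl⟩ := (glueSrcEquiv m).symm.surjective u
  rw [Equiv.apply_symm_apply]
  rfl

theorem projL_glueSrcEquiv (u : {u // u ∈ (glue P Q m).S}) :
    projL m u.val = some (glueSrcEquiv m u).val :=
  congrArg (projL m) (coe_eq_inl_glueSrcEquiv m u)

theorem IfacesExtremal.tgtIface_glue (hP : IfacesExtremal P) (hQ : IfacesExtremal Q) :
    Iso (glue P Q m).tgtIface Q.tgtIface :=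
  ⟨glueTgtEquiv m,
    fun u _ => iff_of_false ((ifacesExtremal_glue m hP hQ).2 _ u.2 _)
      (hQ.2 _ (glueTgtEquiv m u).2 _),
    fun u v => glue_evord_of_projR (projR_glueTgtEquiv m u) (projR_glueTgtEquiv m v),
    fun _ => Iff.rfl, fun _ => Iff.rfl,
    fun u => (glue_lab_of_projR (projR_glueTgtEquiv m u)).symm⟩

theorem IfacesExtremal.srcIface_glue (hP : IfacesExtremal P) (hQ : IfacesExtremal Q) :
    Iso (glue P Q m).srcIface P.srcIface :=
  ⟨glueSrcEquiv m,
    fun _ v => iff_of_false ((ifacesExtremal_glue m hP hQ).1 _ v.2 _)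
      (hP.1 _ (glueSrcEquiv m v).2 _),
    fun u v => glue_evord_of_projL (projL_glueSrcEquiv m u) (projL_glueSrcEquiv m v),
    fun _ => Iff.rfl, fun _ => Iff.rfl,
    fun u => (glue_lab_of_projL (projL_glueSrcEquiv m u)).symm⟩

end Interfaces

section Congr

variable {P Q P' Q' : PreIpomset σ} {f : P.carrier ≃ P'.carrier} {g : Q.carrier ≃ Q'.carrier}

theorem isIsoEquiv_glue_of_proj {m : Matching P Q} {m' : Matching P' Q'} (hf : IsIsoEquiv f)
    (hg : IsIsoEquiv g) (E : (glue P Q m).carrier ≃ (glue P' Q' m').carrier)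
    (hL : ∀ u, projL m' (E u) = (projL m u).map f)
    (hR : ∀ u, projR m' (E u) = (projR m u).map g) : IsIsoEquiv E where
  lt_iff u v := by
    rw [glue_lt_iff, glue_lt_iff, liftRel_congr hL hf.lt_iff, liftRel_congr hR hg.lt_iff, hR, hL,
      Option.map_eq_none_iff, Option.map_eq_none_iff]
  evord_iff u v := by
    rw [glue_evord_iff, glue_evord_iff, liftRel_congr hL hf.evord_iff,
      liftRel_congr hR hg.evord_iff]
  mem_S u := by simp [mem_glue_S, hL, hf.mem_S]
  mem_T u := by simp [mem_glue_T, hR, hg.mem_T]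
  lab_apply u := by
    cases hu : projL m u with
    | some x =>
      rw [glue_lab_of_projL hu, glue_lab_of_projL (by rw [hL, hu]; rfl), hf.lab_apply]
    | none =>
      obtain ⟨y, hy, -⟩ := projL_eq_none_iff.mp hu
      rw [glue_lab_of_projR hy, glue_lab_of_projR (by rw [hR, hy]; rfl), hg.lab_apply]

def Matching.transport (m : Matching P Q) (hf : IsIsoEquiv f) (hg : IsIsoEquiv g) :
    Matching P' Q' where
  g := (f.subtypeEquiv hf.mem_T).symm.trans (m.g.trans (g.subtypeEquiv hg.mem_S))
  evord_iff x y := by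
    obtain ⟨x, rfl⟩ := (f.subtypeEquiv hf.mem_T).surjective x
    obtain ⟨y, rfl⟩ := (f.subtypeEquiv hf.mem_T).surjective y
    simpa [← hf.evord_iff, ← hg.evord_iff] using m.evord_iff x y
  lab_eq x := by
    obtain ⟨x, rfl⟩ := (f.subtypeEquiv hf.mem_T).surjective x
    simpa [hg.lab_apply, hf.lab_apply] using m.lab_eq x

theorem Matching.fwd_transport (m : Matching P Q) (hf : IsIsoEquiv f) (hg : IsIsoEquiv g)
    (x : P.carrier) : (m.transport hf hg).fwd (f x) = (m.fwd x).map g := by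
  by_cases hx : x ∈ P.T
  · have hx' : f x ∈ P'.T := (hf.mem_T x).mp hx
    simp [fwd, hx, hx', transport]
  · have hx' : f x ∉ P'.T := fun h => hx ((hf.mem_T x).mpr h)
    simp [fwd, hx, hx']

theorem GlueRel.congr {R R' : PreIpomset σ} (iP : Iso P P') (iQ : Iso Q Q') (iR : Iso R R')
    (h : GlueRel P Q R) : GlueRel P' Q' R' := by
  obtain ⟨m, iPQ⟩ := h
  obtain ⟨f, hf⟩ := iso_iff.mp iP
  obtain ⟨g, hg⟩ := iso_iff.mp iQ
  let E : (glue P Q m).carrier ≃ (glue P' Q' (m.transport hf hg)).carrier :=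
    Equiv.sumCongr f (g.subtypeEquiv fun y => not_congr (hg.mem_S y))
  have hE : IsIsoEquiv E := by
    refine isIsoEquiv_glue_of_proj hf hg E (fun u => ?_) (fun u => ?_) <;> rcases u with x | y
    · rfl
    · rfl
    · exact m.fwd_transport hf hg x
    · rfl
  exact ⟨m.transport hf hg, (iso_iff.mpr ⟨E, hE⟩).symm.trans (iPQ.trans iR)⟩

end Congr

section Assoc

variable {P Q U V W : PreIpomset σ}

theorem liftRel_glue_lt {m : Matching P Q} {X : Type} {p : X → Option (glue P Q m).carrier}
    {a b : X} :
    LiftRel (glue P Q m).lt p a b ↔ LiftRel P.lt (fun a => (p a).bind (projL m)) a b ∨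
      LiftRel Q.lt (fun a => (p a).bind (projR m)) a b ∨
      ((∃ x, p a = some x ∧ projR m x = none) ∧ ∃ x', p b = some x' ∧ projL m x' = none) := by
  have h : (glue P Q m).lt = fun u v => LiftRel P.lt (projL m) u v ∨
      LiftRel Q.lt (projR m) u v ∨ (projR m u = none ∧ projL m v = none) :=
    funext₂ fun _ _ => propext glue_lt_iff
  rw [h, liftRel_or, liftRel_or, liftRel_and, liftRel_bind, liftRel_bind]

theorem liftRel_glue_evord {m : Matching P Q} {X : Type} {p : X → Option (glue P Q m).carrier}
    {a b : X} :
    LiftRel (glue P Q m).evord p a b ↔ LiftRel P.evord (fun a => (p a).bind (projL m)) a b ∨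
      LiftRel Q.evord (fun a => (p a).bind (projR m)) a b := by
  rw [liftRel_bind, liftRel_bind, ← liftRel_or]
  rfl

-- The last two disjuncts say that every factor containing `u` comes before every factor
-- containing `v`.
def TripleLt {X : Type} (U V W : PreIpomset σ) (πU : X → Option U.carrier)
    (πV : X → Option V.carrier) (πW : X → Option W.carrier) (u v : X) : Prop :=
  LiftRel U.lt πU u v ∨ LiftRel V.lt πV u v ∨ LiftRel W.lt πW u v ∨
    (πV u = none ∧ πW u = none ∧ πU v = none) ∨ (πW u = none ∧ πU v = none ∧ πV v = none)

section LeftNested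

variable {m1 : Matching U V} (mR : Matching (glue U V m1) W)

noncomputable def projLL : (glue (glue U V m1) W mR).carrier → Option U.carrier :=
  fun u => (projL mR u).bind (projL m1)

noncomputable def projLR : (glue (glue U V m1) W mR).carrier → Option V.carrier :=
  fun u => (projL mR u).bind (projR m1)

theorem lt_glue_glue_left (u v : (glue (glue U V m1) W mR).carrier) :
    (glue (glue U V m1) W mR).lt u v ↔
      TripleLt U V W (projLL mR) (projLR mR) (projR mR) u v := by
  have h1 : (∃ x, projL mR u = some x ∧ projR m1 x = none) ↔
      projLR mR u = none ∧ projR mR u = none := by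
    rcases u with x | c
    · simp only [projL_inl, projR_inl, projLR, Option.bind_some, Option.some.injEq,
        exists_eq_left', Matching.fwd_eq_none]
      refine ⟨fun hx => ⟨hx, fun hT => ?_⟩, And.left⟩
      obtain ⟨y, hy, -⟩ := mem_glue_T.mp hT
      simp_all
    · simp [projLR]
  have h2 : (∃ x, projL mR v = some x ∧ projL m1 x = none) ↔
      projLL mR v = none ∧ projLR mR v ≠ none := by
    rcases v with x | c
    · simpa [projLL, projLR] using projR_ne_none_of_projL_eq_none
    · simp [projLL, projLR]
  have h3 : projL mR v = none ↔ projLL mR v = none ∧ projLR mR v = none := by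
    rcases v with x | c
    · simpa [projLL, projLR] using projR_ne_none_of_projL_eq_none
    · simp [projLL, projLR]
  rw [glue_lt_iff, liftRel_glue_lt, h1, h2, h3]
  unfold TripleLt projLL projLR
  tauto

theorem evord_glue_glue_left (u v : (glue (glue U V m1) W mR).carrier) :
    (glue (glue U V m1) W mR).evord u v ↔ LiftRel U.evord (projLL mR) u v ∨
      LiftRel V.evord (projLR mR) u v ∨ LiftRel W.evord (projR mR) u v := by
  rw [glue_evord_iff, liftRel_glue_evord, or_assoc]
  rfl

theorem mem_S_glue_glue_left (u : (glue (glue U V m1) W mR).carrier) :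
    u ∈ (glue (glue U V m1) W mR).S ↔ ∃ a, projLL mR u = some a ∧ a ∈ U.S := by
  simp only [mem_glue_S, projLL, Option.bind_eq_some_iff]
  constructor
  · rintro ⟨x, hu, a, hx, ha⟩
    exact ⟨a, ⟨x, hu, hx⟩, ha⟩
  · rintro ⟨a, ⟨x, hu, hx⟩, ha⟩
    exact ⟨x, hu, a, hx, ha⟩

end LeftNested

section RightNested

variable {m2 : Matching V W} (mL : Matching U (glue V W m2))

noncomputable def projRL : (glue U (glue V W m2) mL).carrier → Option V.carrier :=
  fun x => (projR mL x).bind (projL m2)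

noncomputable def projRR : (glue U (glue V W m2) mL).carrier → Option W.carrier :=
  fun x => (projR mL x).bind (projR m2)

theorem lt_glue_glue_right (x y : (glue U (glue V W m2) mL).carrier) :
    (glue U (glue V W m2) mL).lt x y ↔
      TripleLt U V W (projL mL) (projRL mL) (projRR mL) x y := by
  have h1 : (∃ g, projR mL x = some g ∧ projR m2 g = none) ↔
      projRR mL x = none ∧ projRL mL x ≠ none := by
    cases hx : projR mL x
    · simp [projRR, projRL, hx]
    · simpa [projRR, projRL, hx] using projL_ne_none_of_projR_eq_none
  have h2 : (∃ g, projR mL y = some g ∧ projL m2 g = none) ↔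
      projL mL y = none ∧ projRL mL y = none := by
    constructor
    · rintro ⟨g, hy, hg⟩
      refine ⟨projL_eq_none_iff.mpr ⟨g, hy, fun hS => ?_⟩, by simp [projRL, hy, hg]⟩
      obtain ⟨b, hb, -⟩ := mem_glue_S.mp hS
      simp_all
    · rintro ⟨hy, hy'⟩
      obtain ⟨g, hg, -⟩ := projL_eq_none_iff.mp hy
      exact ⟨g, hg, by simpa [projRL, hg] using hy'⟩
  have h3 : projR mL x = none ↔ projRL mL x = none ∧ projRR mL x = none := by
    cases hx : projR mL x
    · simp [projRR, projRL, hx]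
    · simpa [projRR, projRL, hx] using projR_ne_none_of_projL_eq_none
  rw [glue_lt_iff, liftRel_glue_lt, h1, h2, h3]
  unfold TripleLt projRL projRR
  tauto

theorem evord_glue_glue_right (x y : (glue U (glue V W m2) mL).carrier) :
    (glue U (glue V W m2) mL).evord x y ↔ LiftRel U.evord (projL mL) x y ∨
      LiftRel V.evord (projRL mL) x y ∨ LiftRel W.evord (projRR mL) x y := by
  rw [glue_evord_iff, liftRel_glue_evord]
  rfl

theorem mem_T_glue_glue_right (x : (glue U (glue V W m2) mL).carrier) :
    x ∈ (glue U (glue V W m2) mL).T ↔ ∃ w, projRR mL x = some w ∧ w ∈ W.T := by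
  simp only [mem_glue_T, projRR, Option.bind_eq_some_iff]
  constructor
  · rintro ⟨g, hx, w, hg, hw⟩
    exact ⟨w, ⟨g, hx, hg⟩, hw⟩
  · rintro ⟨w, ⟨g, hx, hg⟩, hw⟩
    exact ⟨g, hx, w, hg, hw⟩

end RightNested

variable {m1 : Matching U V} {m2 : Matching V W} (mR : Matching (glue U V m1) W)
  (mL : Matching U (glue V W m2))

def assocEquiv : (glue (glue U V m1) W mR).carrier ≃ (glue U (glue V W m2) mL).carrier where
  toFun
    | Sum.inl (Sum.inl a) => Sum.inl a
    | Sum.inl (Sum.inr b) => Sum.inr ⟨Sum.inl b.val, inl_mem_glue_S.not.mpr b.2⟩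
    | Sum.inr c => Sum.inr ⟨Sum.inr c, inr_notMem_glue_S c⟩
  invFun
    | Sum.inl a => Sum.inl (Sum.inl a)
    | Sum.inr ⟨Sum.inl b, h⟩ => Sum.inl (Sum.inr ⟨b, inl_mem_glue_S.not.mp h⟩)
    | Sum.inr ⟨Sum.inr c, _⟩ => Sum.inr c
  left_inv := by rintro ((a | b) | c) <;> rfl
  right_inv := by rintro (a | ⟨b | c, h⟩) <;> rfl

theorem projL_comp_assocEquiv : projL mL ∘ assocEquiv mR mL = projLL mR := by
  funext u
  rcases u with (a | b) | c <;> rfl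

variable {mR mL}

theorem projRL_comp_assocEquiv (hL : ∀ a, mL.fwd a = (m1.fwd a).map Sum.inl) :
    projRL mL ∘ assocEquiv mR mL = projLR mR := by
  funext u
  rcases u with (a | b) | c
  · show (mL.fwd a).bind (projL m2) = m1.fwd a
    rw [hL]
    cases m1.fwd a <;> rfl
  all_goals rfl

theorem projRR_comp_assocEquiv (hR : ∀ x, mR.fwd x = (projR m1 x).bind m2.fwd)
    (hL : ∀ a, mL.fwd a = (m1.fwd a).map Sum.inl) :
    projRR mL ∘ assocEquiv mR mL = projR mR := by
  funext u
  rcases u with (a | b) | c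
  · show (mL.fwd a).bind (projR m2) = mR.fwd (Sum.inl a)
    rw [hL]
    refine Eq.trans (?_ : _ = (m1.fwd a).bind m2.fwd) (hR (Sum.inl a)).symm
    cases m1.fwd a <;> rfl
  · show m2.fwd b = mR.fwd (Sum.inr b)
    exact (hR (Sum.inr b)).symm
  · rfl

theorem isIsoEquiv_assocEquiv (hR : ∀ x, mR.fwd x = (projR m1 x).bind m2.fwd)
    (hL : ∀ a, mL.fwd a = (m1.fwd a).map Sum.inl) : IsIsoEquiv (assocEquiv mR mL) where
  lt_iff u v := by
    rw [lt_glue_glue_left, lt_glue_glue_right, ← projL_comp_assocEquiv,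
      ← projRL_comp_assocEquiv hL, ← projRR_comp_assocEquiv hR hL]
    rfl
  evord_iff u v := by
    rw [evord_glue_glue_left, evord_glue_glue_right, ← projL_comp_assocEquiv,
      ← projRL_comp_assocEquiv hL, ← projRR_comp_assocEquiv hR hL]
    rfl
  mem_S u := by
    rw [mem_S_glue_glue_left, ← projL_comp_assocEquiv]
    rfl
  mem_T u := by
    rw [mem_T_glue_glue_right]
    show _ ↔ ∃ w, (projRR mL ∘ assocEquiv mR mL) u = some w ∧ w ∈ W.T
    rw [projRR_comp_assocEquiv hR hL]
    rfl
  lab_apply := by rintro ((a | b) | c) <;> rfl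

namespace Matching

theorem fwd_eq_bind_of_g (h : ∀ t, (mR.g t).val = (m2.g (glueTgtEquiv m1 t)).val)
    (x : (glue U V m1).carrier) : mR.fwd x = (projR m1 x).bind m2.fwd := by
  by_cases hx : x ∈ (glue U V m1).T
  · have hy := (glueTgtEquiv m1 ⟨x, hx⟩).2
    rw [projR_glueTgtEquiv m1 ⟨x, hx⟩, Option.bind_some]
    simp [fwd, hx, hy, h]
  · rw [fwd_eq_none.mpr hx]
    cases hq : projR m1 x with
    | none => rfl
    | some y => exact (fwd_eq_none.mpr fun hy => hx (mem_glue_T.mpr ⟨y, hq, hy⟩)).symm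

theorem fwd_eq_map_of_g (h : ∀ a, (mL.g a).val = Sum.inl (m1.g a).val) (a : U.carrier) :
    mL.fwd a = (m1.fwd a).map Sum.inl := by
  unfold fwd
  split_ifs with ha
  · exact congrArg some (h ⟨a, ha⟩)
  · rfl

variable (m1 m2)

noncomputable def fromGlueTgt : Matching (glue U V m1) W where
  g := (glueTgtEquiv m1).trans m2.g
  evord_iff u u' := (glue_evord_of_projR (projR_glueTgtEquiv m1 u)
    (projR_glueTgtEquiv m1 u')).trans (m2.evord_iff _ _)
  lab_eq u := (m2.lab_eq _).trans (glue_lab_of_projR (projR_glueTgtEquiv m1 u)).symm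

noncomputable def toGlueSrc : Matching U (glue V W m2) where
  g := m1.g.trans (glueSrcEquiv m2).symm
  evord_iff a a' := (m1.evord_iff a a').trans (glue_evord_of_projL rfl rfl).symm
  lab_eq a := (glue_lab_of_projL rfl).trans (m1.lab_eq a)

variable (mR mL)

noncomputable def restrictTgt : Matching V W where
  g := (glueTgtEquiv m1).symm.trans mR.g
  evord_iff y y' := by
    have h := glue_evord_of_projR (projR_glueTgtEquiv m1 ((glueTgtEquiv m1).symm y))
      (projR_glueTgtEquiv m1 ((glueTgtEquiv m1).symm y'))
    rw [Equiv.apply_symm_apply, Equiv.apply_symm_apply] at h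
    exact h.symm.trans (mR.evord_iff _ _)
  lab_eq y := by
    have h := glue_lab_of_projR (projR_glueTgtEquiv m1 ((glueTgtEquiv m1).symm y))
    rw [Equiv.apply_symm_apply] at h
    exact (mR.lab_eq _).trans h

noncomputable def restrictSrc : Matching U V where
  g := mL.g.trans (glueSrcEquiv m2)
  evord_iff a a' := (mL.evord_iff a a').trans
    (glue_evord_of_projL (projL_glueSrcEquiv m2 _) (projL_glueSrcEquiv m2 _))
  lab_eq a := (glue_lab_of_projL (projL_glueSrcEquiv m2 _)).symm.trans (mL.lab_eq a)

end Matching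

theorem GlueRel.assoc {X R : PreIpomset σ} (h1 : GlueRel U V X) (h2 : GlueRel X W R) :
    ∃ Y, GlueRel V W Y ∧ GlueRel U Y R := by
  obtain ⟨m1, i1⟩ := h1
  obtain ⟨mR, iR⟩ := h2.congr i1.symm (Iso.refl W) (Iso.refl R)
  let m2 := Matching.restrictTgt m1 mR
  have hR := Matching.fwd_eq_bind_of_g (m2 := m2) (mR := mR) fun t => by
    simp [m2, Matching.restrictTgt]
  have hL := Matching.fwd_eq_map_of_g (mL := Matching.toGlueSrc m1 m2) fun _ => rfl
  exact ⟨glue V W m2, ⟨m2, Iso.refl _⟩, Matching.toGlueSrc m1 m2,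
    (iso_iff.mpr ⟨_, isIsoEquiv_assocEquiv hR hL⟩).symm.trans iR⟩

theorem GlueRel.assoc_symm {Y R : PreIpomset σ} (h1 : GlueRel V W Y) (h2 : GlueRel U Y R) :
    ∃ X, GlueRel U V X ∧ GlueRel X W R := by
  obtain ⟨m2, i2⟩ := h1
  obtain ⟨mL, iL⟩ := h2.congr (Iso.refl U) i2.symm (Iso.refl R)
  let m1 := Matching.restrictSrc m2 mL
  have hR := Matching.fwd_eq_bind_of_g (mR := Matching.fromGlueTgt m1 m2) fun _ => rfl
  have hL := Matching.fwd_eq_map_of_g (m1 := m1) (mL := mL) fun a =>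
    coe_eq_inl_glueSrcEquiv m2 (mL.g a)
  exact ⟨glue U V m1, ⟨m1, Iso.refl _⟩, Matching.fromGlueTgt m1 m2,
    (iso_iff.mpr ⟨_, isIsoEquiv_assocEquiv hR hL⟩).trans iL⟩

end Assoc

end PreIpomset

namespace PAutomaton

open PreIpomset

variable {σ : Type} {A B : PAutomaton σ}

section Rec

variable {p r : A.Q} {α : A.Path p r} {P : PreIpomset σ}

theorem IsPA.ifacesExtremal_of_rec (hA : A.IsPA) (h : Rec α P) : IfacesExtremal P := by
  obtain ⟨-, -, hmu, hlab, -, -⟩ := hA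
  induction h with
  | nil q R hR => exact hR.ifacesExtremal (hmu q).2.1.idOf.ifacesExtremal
  | cons e rest hrest hglue ih =>
    obtain ⟨m, hR⟩ := hglue
    exact hR.ifacesExtremal (ifacesExtremal_glue m (hlab e).ifacesExtremal ih)

theorem IsPA.tgtIface_rec (hA : A.IsPA) (h : Rec α P) : Iso P.tgtIface (A.mu r) := by
  induction h with
  | nil q R hR => exact hR.symm.tgtIface.trans (hA.2.2.1 q).tgtIface_idOf
  | cons e rest hrest hglue ih =>
    obtain ⟨m, hR⟩ := hglue
    exact hR.symm.tgtIface.trans (((hA.2.2.2.1 e).ifacesExtremal.tgtIface_glue m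
      (hA.ifacesExtremal_of_rec hrest)).trans ih)

theorem IsPA.srcIface_rec (hA : A.IsPA) (h : Rec α P) : Iso P.srcIface (A.mu p) := by
  cases h with
  | nil _ R hR => exact hR.symm.srcIface.trans (hA.2.2.1 _).srcIface_idOf
  | cons e rest hrest hglue =>
    obtain ⟨m, hR⟩ := hglue
    exact hR.symm.srcIface.trans (((hA.2.2.2.1 e).ifacesExtremal.srcIface_glue m
      (hA.ifacesExtremal_of_rec hrest)).trans (hA.2.2.2.2.1 e))

end Rec

theorem iso_mu_of_glueRel (hA : A.IsPA) (hB : B.IsPA) {p r : A.Q} {q rB : B.Q}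
    {α : A.Path p r} {β : B.Path q rB} {P Q R : PreIpomset σ} (hα : Rec α P) (hβ : Rec β Q)
    (hPQ : GlueRel P Q R) : Iso (A.mu r) (B.mu q) := by
  obtain ⟨m, -⟩ := hPQ
  exact (hA.tgtIface_rec hα).symm.trans ((m.tgtIface_iso_srcIface
    (hA.ifacesExtremal_of_rec hα) (hB.ifacesExtremal_of_rec hβ)).trans (hB.srcIface_rec hβ))

theorem IsPA.concatAut (hA : A.IsPA) (hB : B.IsPA) : (A.concatAut B).IsPA := by
  obtain ⟨hQA, hEA, hmuA, hlabA, hsrcA, htgtA⟩ := hA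
  obtain ⟨hQB, hEB, hmuB, hlabB, hsrcB, htgtB⟩ := hB
  refine ⟨Finite.instSum, @Finite.instSum _ _ hEA Finite.instSum, ?_, ?_, ?_, ?_⟩
  · rintro (q | q)
    exacts [hmuA q, hmuB q]
  · rintro (a | f | br)
    exacts [hlabA a, hlabB f, (hmuA _).isIpomset_idOf]
  · rintro (a | f | br)
    exacts [hsrcA a, hsrcB f, (hmuA _).srcIface_idOf]
  · rintro (a | f | br)
    exacts [htgtA a, htgtB f, (hmuA _).tgtIface_idOf.trans br.2.2.2]

theorem IsGST.concatAut (hgA : A.IsGST) (hA : A.IsPA) (hgB : B.IsGST) :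
    (A.concatAut B).IsGST := by
  rintro (a | f | br)
  exacts [hgA a, hgB f, (hA.2.2.1 _).2.1.idOf]

def Path.concatRight (A : PAutomaton σ) :
    ∀ {q r : B.Q}, B.Path q r → (A.concatAut B).Path (Sum.inr q) (Sum.inr r)
  | _, _, .nil q => @Path.nil σ (A.concatAut B) (Sum.inr q)
  | _, _, .cons f rest =>
      @Path.cons σ (A.concatAut B) (Sum.inr (Sum.inl f)) _ (concatRight A rest)

theorem Rec.concatRight {q r : B.Q} {β : B.Path q r} {Q : PreIpomset σ} (h : Rec β Q) :
    Rec (β.concatRight A) Q := by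
  induction h with
  | nil q R hR => exact Rec.nil _ _ hR
  | cons f rest _ hglue ih =>
    exact @Rec.cons σ (A.concatAut B) (Sum.inr (Sum.inl f)) _ _ _ _ ih hglue

theorem exists_rec_concatAut {p r : A.Q} {α : A.Path p r} {P Q R : PreIpomset σ}
    (hP : Rec α P) (hPQ : GlueRel P Q R) {q rB : B.Q} {β : B.Path q rB} (hQ : Rec β Q)
    (hr : r ∈ A.accept) (hq : q ∈ B.start) (hrq : Iso (A.mu r) (B.mu q)) :
    ∃ γ : (A.concatAut B).Path (Sum.inl p) (Sum.inr rB), Rec γ R := by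
  induction hP generalizing R with
  | nil r P hP =>
    refine ⟨@Path.cons σ (A.concatAut B) (Sum.inr (Sum.inr ⟨(r, q), hr, hq, hrq⟩)) _
      (β.concatRight A), Rec.cons _ _ hQ.concatRight ?_⟩
    exact hPQ.congr hP.symm (Iso.refl Q) (Iso.refl R)
  | cons e rest _ hglue ih =>
    obtain ⟨R', hR', hR⟩ := hglue.assoc hPQ
    obtain ⟨γ, hγ⟩ := ih hR' hr hrq
    exact ⟨@Path.cons σ (A.concatAut B) (Sum.inl e) _ γ, Rec.cons _ _ hγ hR⟩

theorem exists_rec_of_rec_concatAut_inr {c z : (A.concatAut B).Q}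
    {γ : (A.concatAut B).Path c z} {R : PreIpomset σ} (h : Rec γ R) :
    ∀ q rB, c = Sum.inr q → z = Sum.inr rB → ∃ β : B.Path q rB, Rec β R := by
  induction h with
  | nil c R hR =>
    rintro q rB rfl hq
    obtain rfl := Sum.inr.inj hq
    exact ⟨Path.nil _, Rec.nil _ _ hR⟩
  | cons e rest _ hglue ih =>
    rintro q rB hq rfl
    rcases e with a | f | br
    · cases hq
    · obtain rfl : B.src f = q := Sum.inr.inj hq
      obtain ⟨β, hβ⟩ := ih (B.tgt f) rB rfl rfl
      exact ⟨Path.cons f β, Rec.cons f β hβ hglue⟩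
    · cases hq

theorem exists_rec_of_rec_concatAut_inl {c z : (A.concatAut B).Q}
    {γ : (A.concatAut B).Path c z} {R : PreIpomset σ} (h : Rec γ R) :
    ∀ p rB, c = Sum.inl p → z = Sum.inr rB →
      ∃ (P Q : PreIpomset σ) (r : A.Q) (q : B.Q) (α : A.Path p r) (β : B.Path q rB),
        Rec α P ∧ Rec β Q ∧ GlueRel P Q R ∧ r ∈ A.accept ∧ q ∈ B.start := by
  induction h with
  | nil c R hR =>
    rintro p rB rfl h
    cases h
  | cons e rest hrest hglue ih =>
    rintro p rB hp rfl
    rcases e with a | f | br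
    · obtain rfl : A.src a = p := Sum.inl.inj hp
      obtain ⟨P, Q, r, q, α, β, hα, hβ, hPQ, hr, hq⟩ := ih (A.tgt a) rB rfl rfl
      obtain ⟨X, hX, hXQ⟩ := hPQ.assoc_symm hglue
      exact ⟨X, Q, r, q, Path.cons a α, β, Rec.cons a α hα hX, hβ, hXQ, hr, hq⟩
    · cases hp
    · obtain rfl : br.val.1 = p := Sum.inl.inj hp
      obtain ⟨β, hβ⟩ := exists_rec_of_rec_concatAut_inr hrest br.val.2 rB rfl rfl
      exact ⟨_, _, br.val.1, br.val.2, Path.nil _, β, Rec.nil _ _ (Iso.refl _), hβ, hglue,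
        br.2.1, br.2.2.1⟩

theorem lang_concatAut (hA : A.IsPA) (hB : B.IsPA) :
    (A.concatAut B).lang = glueLang A.lang B.lang := by
  ext R
  constructor
  · rintro ⟨_, _, γ, ⟨p, hp, rfl⟩, ⟨rB, hrB, rfl⟩, hγ⟩
    obtain ⟨P, Q, r, q, α, β, hα, hβ, hPQ, hr, hq⟩ :=
      exists_rec_of_rec_concatAut_inl hγ p rB rfl rfl
    exact ⟨P, ⟨p, r, α, hp, hr, hα⟩, Q, ⟨q, rB, β, hq, hrB, hβ⟩, hPQ⟩
  · rintro ⟨P, ⟨p, r, α, hp, hr, hα⟩, Q, ⟨q, rB, β, hq, hrB, hβ⟩, hPQ⟩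
    obtain ⟨γ, hγ⟩ :=
      exists_rec_concatAut hα hPQ hβ hr hq (iso_mu_of_glueRel hA hB hα hβ hPQ)
    exact ⟨_, _, γ, ⟨p, hp, rfl⟩, ⟨rB, hrB, rfl⟩, hγ⟩

end PAutomaton

theorem concat_lang_general {σ : Type} (A B : PAutomaton σ)
    (hA : A.IsPA) (hgA : A.IsGST)
    (hB : B.IsPA) (hgB : B.IsGST) :
    (A.concatAut B).IsPA ∧ (A.concatAut B).IsGST ∧
    (A.concatAut B).lang = glueLang A.lang B.lang :=
  ⟨hA.concatAut hB, hgA.concatAut hA hgB, PAutomaton.lang_concatAut hA hB⟩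

/-- For reduced gST-automata `𝒜`, `ℬ`, the concatenation `𝒜*ℬ` is a
gST-automaton with `L(𝒜*ℬ) = L(𝒜)·L(ℬ)`. -/
theorem concat_lang {σ : Type} [Finite σ] (A B : PAutomaton σ)
    (hA : A.IsPA) (hgA : A.IsGST) (hrA : A.Reduced)
    (hB : B.IsPA) (hgB : B.IsGST) (hrB : B.Reduced) :
    (A.concatAut B).IsPA ∧ (A.concatAut B).IsGST ∧
    (A.concatAut B).lang = glueLang A.lang B.lang :=
  concat_lang_general A B hA hgA hB hgB

end HDA
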